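/- arXiv:1904.03526 — 3 statements merged into one kernel-verified Lean document; each statement's English description precedes it below -/
import Mathlib

section
/- Let f : ℝ → ℝ be a continuous strictly positive probability density (∫ f = 1) and A : ℝ^ℕ → ℝ a bounded continuous potential. Define the Ruelle operator L_A(φ)(x) = ∫_ℝ e^{A(a·x)} φ(a·x) f(a) da, where a·x denotes the sequence (a, x₁, x₂, …). Then L_A maps bounded continuous functions on ℝ^ℕ to bounded continuous functions, and ‖L_A φ‖_∞ ≤ e^{‖A‖_∞}‖φ‖_∞. -/
open Real MeasureTheory

/-- `a · x = (a, x₁, x₂, …)`. -/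
def consR (a : ℝ) (x : ℕ → ℝ) : ℕ → ℝ := fun n =>
  match n with
  | 0 => a
  | k + 1 => x k

lemma consR_cont : Continuous (fun p : ℝ × (ℕ → ℝ) => consR p.1 p.2) := by
  apply continuous_pi
  intro n
  match n with
  | 0 => exact continuous_fst
  | k + 1 => exact (continuous_apply k).comp continuous_snd

/-- If `f` is a continuous strictly positive probability density and `A` is a
bounded continuous potential, then the Ruelle operator
`L_A(φ)(x) = ∫ e^{A(ax)} φ(ax) f(a) da` maps bounded continuous functions to
bounded continuous functions, with `‖L_A φ‖_∞ ≤ e^{‖A‖_∞}‖φ‖_∞`. -/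
theorem ruelle_maps_Cb_to_Cb (f : ℝ → ℝ) (hfc : Continuous f) (hfpos : ∀ a, 0 < f a)
    (hf1 : ∫ a : ℝ, f a = 1)
    (A : (ℕ → ℝ) → ℝ) (hAc : Continuous A) (CA : ℝ) (hA : ∀ x, |A x| ≤ CA)
    (φ : (ℕ → ℝ) → ℝ) (hφc : Continuous φ) (Cφ : ℝ) (hφ : ∀ x, |φ x| ≤ Cφ) :
    Continuous (fun x : ℕ → ℝ => ∫ a : ℝ, Real.exp (A (consR a x)) * φ (consR a x) * f a) ∧
    ∀ x : ℕ → ℝ,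
      |∫ a : ℝ, Real.exp (A (consR a x)) * φ (consR a x) * f a| ≤ Real.exp CA * Cφ := by
  have hfint : Integrable f := by
    by_contra h
    rw [integral_undef h] at hf1
    norm_num at hf1
  have hCφ : 0 ≤ Cφ := le_trans (abs_nonneg _) (hφ (fun _ => 0))
  set F : (ℕ → ℝ) → ℝ → ℝ := fun x a => Real.exp (A (consR a x)) * φ (consR a x) * f a
  have hFc : ∀ x, Continuous (F x) := by
    intro x
    have h1 : Continuous fun a : ℝ => consR a x :=
      consR_cont.comp (continuous_id.prodMk continuous_const)
    exact (((Real.continuous_exp.comp (hAc.comp h1)).mul (hφc.comp h1)).mul hfc)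
  have hbound : ∀ x a, ‖F x a‖ ≤ Real.exp CA * Cφ * f a := by
    intro x a
    have hf' : 0 < f a := hfpos a
    rw [Real.norm_eq_abs, abs_mul, abs_mul, abs_of_pos hf',
      abs_of_pos (Real.exp_pos _)]
    have h1 : Real.exp (A (consR a x)) ≤ Real.exp CA :=
      Real.exp_le_exp.mpr (le_trans (le_abs_self _) (hA _))
    have h2 : |φ (consR a x)| ≤ Cφ := hφ _
    have := mul_le_mul (mul_le_mul h1 h2 (abs_nonneg _) (Real.exp_pos _).le)
      (le_refl (f a)) hf'.le (by positivity)
    linarith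
  have hbint : Integrable (fun a => Real.exp CA * Cφ * f a) := hfint.const_mul _
  have hFint : ∀ x, Integrable (F x) := by
    intro x
    exact hbint.mono' ((hFc x).aestronglyMeasurable)
      (Filter.Eventually.of_forall (hbound x))
  constructor
  · apply continuous_of_dominated (fun x => (hFc x).aestronglyMeasurable)
      (fun x => Filter.Eventually.of_forall (hbound x)) hbint
    exact Filter.Eventually.of_forall fun a =>
      (((Real.continuous_exp.comp (hAc.comp (consR_cont.comp
        (continuous_const.prodMk continuous_id)))).mul
        (hφc.comp (consR_cont.comp (continuous_const.prodMk continuous_id)))).mul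
        continuous_const)
  · intro x
    calc |∫ a, F x a| ≤ ∫ a, |F x a| := by simpa using norm_integral_le_integral_norm (F x)
      _ ≤ ∫ a, Real.exp CA * Cφ * f a := by
          apply integral_mono (hFint x).abs hbint
          intro a
          simpa using hbound x a
      _ = Real.exp CA * Cφ := by
          rw [integral_const_mul, hf1, mul_one]
end

section
/- Let B be a bounded continuous normalized potential (L_B(1) = 1) and μ a σ-invariant Borel probability measure on ℝ^ℕ with L_B^* μ = μ. Then for every strictly positive bounded continuous function u, ∫ log(L_0(u)/u) dμ ≥ −∫ B dμ, with equality for u = e^B. Consequently h(μ) := inf over such u of ∫ log(L_0(u)/u) dμ equals −∫ B dμ. -/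
open Real MeasureTheory

def shiftR (x : ℕ → ℝ) : ℕ → ℝ := fun n => x (n + 1)

/-- The Ruelle operator with zero potential: `L_0(u)(x) = ∫ u(ax) f(a) da`. -/
noncomputable def Lzero (f : ℝ → ℝ) (u : (ℕ → ℝ) → ℝ) (x : ℕ → ℝ) : ℝ :=
  ∫ a : ℝ, u (consR a x) * f a

/-- The entropy
`h(μ) = inf { ∫ log(L_0(u)/u) dμ : u strictly positive bounded continuous }`. -/
noncomputable def entropyXY (f : ℝ → ℝ) (μ : MeasureTheory.Measure (ℕ → ℝ)) : ℝ :=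
  sInf {r : ℝ | ∃ u : (ℕ → ℝ) → ℝ, Continuous u ∧ (∀ x, 0 < u x) ∧
    (∃ M, ∀ x, u x ≤ M) ∧ r = ∫ x, Real.log (Lzero f u x / u x) ∂μ}

open Filter Topology

/-!
Write `L_B φ = L_0 (e^B φ)`. If `u` takes values in `[ε, M]` with `ε > 0`, then `φ = log u - B` is
bounded and continuous, and Jensen's inequality for the probability density `a ↦ e^{B(ax)} f(a)`
(this is `L_B 1 = 1`) gives `L_B φ ≤ log L_B (e^φ) = log L_0 u`. Integrating against `μ = L_B^* μ`
yields `∫ log u - ∫ B ≤ ∫ log L_0 u`. A general positive `u` is handled by applying this to `u + ε`,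
using `L_0 (u + ε) = L_0 u + ε`, and letting `ε → 0` by dominated convergence with dominating
function `|log (L_0 u / u)|`. When that function is not integrable its integral is `0`, and the
claim `∫ B ≥ 0` is the case `u = 1`. Equality for `u = e^B` is `L_0 e^B = 1`.
-/

theorem integral_mul_le_log_integral_mul_exp {α : Type*} [MeasurableSpace α] {ν : Measure α}
    {w φ : α → ℝ} (hw0 : 0 ≤ w) (hw1 : ∫ a, w a ∂ν = 1)
    (hwφ : Integrable (fun a => w a * φ a) ν) (hwe : Integrable (fun a => w a * exp (φ a)) ν) :
    ∫ a, w a * φ a ∂ν ≤ log (∫ a, w a * exp (φ a) ∂ν) := by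
  have hw : Integrable w ν := .of_integral_ne_zero (by simp [hw1])
  set c := ∫ a, w a * exp (φ a) ∂ν
  have hc : 0 < c := by
    rw [integral_pos_iff_support_of_nonneg (fun a => mul_nonneg (hw0 a) (exp_pos _).le) hwe,
      Function.support_mul, Function.support_eq_univ fun a => (exp_pos (φ a)).ne', Set.inter_univ,
      ← integral_pos_iff_support_of_nonneg hw0 hw, hw1]
    exact one_pos
  -- the tangent line `t + 1 ≤ e^t` at `t = φ - log c`
  have htangent : ∀ a, w a * φ a - w a * log c ≤ w a * exp (φ a) / c - w a := by
    intro a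
    have h := mul_le_mul_of_nonneg_left (add_one_le_exp (φ a - log c)) (hw0 a)
    rw [exp_sub, exp_log hc] at h
    linarith [mul_div_assoc (w a) (exp (φ a)) c]
  have h : ∫ a, (w a * φ a - w a * log c) ∂ν ≤ ∫ a, (w a * exp (φ a) / c - w a) ∂ν :=
    integral_mono (hwφ.sub (hw.mul_const _)) ((hwe.div_const c).sub hw) htangent
  rw [integral_sub hwφ (hw.mul_const _), integral_sub (hwe.div_const c) hw, integral_mul_const,
    integral_div, hw1, div_self hc.ne'] at h
  linarith

theorem abs_log_add_sub_log_add_le {a b ε : ℝ} (ha : 0 < a) (hb : 0 < b) (hε : 0 ≤ ε) :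
    |log (a + ε) - log (b + ε)| ≤ |log a - log b| := by
  wlog hab : a ≤ b generalizing a b
  · rw [abs_sub_comm, abs_sub_comm (log a)]
    exact this hb ha (le_of_not_ge hab)
  have hmono : log (a + ε) ≤ log (b + ε) := log_le_log (by positivity) (by linarith)
  have hcross : log ((b + ε) * a) ≤ log (b * (a + ε)) :=
    log_le_log (by positivity) (by nlinarith)
  rw [log_mul (by positivity) ha.ne', log_mul hb.ne' (by positivity)] at hcross
  rw [abs_of_nonpos (by linarith), abs_of_nonpos (by linarith [log_le_log ha hab])]
  linarith

theorem abs_exp_mul_le {b c B C : ℝ} (hb : |b| ≤ B) (hc : |c| ≤ C) : |exp b * c| ≤ exp B * C := by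
  rw [abs_mul, abs_exp]
  exact mul_le_mul (exp_le_exp.2 (le_of_abs_le hb)) hc (abs_nonneg _) (exp_pos _).le

theorem continuous_consR : Continuous fun p : ℝ × (ℕ → ℝ) => consR p.1 p.2 := by
  refine continuous_pi fun n => ?_
  cases n with
  | zero => exact continuous_fst
  | succ k => exact (continuous_apply k).comp continuous_snd

theorem continuous_consR_left (x : ℕ → ℝ) : Continuous fun a : ℝ => consR a x :=
  continuous_consR.comp (continuous_id.prodMk continuous_const)

section Lzero

variable {f : ℝ → ℝ}

theorem integrable_comp_consR_mul (hf : Integrable f) {G : (ℕ → ℝ) → ℝ} (hG : Continuous G)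
    {C : ℝ} (hGC : ∀ z, |G z| ≤ C) (x : ℕ → ℝ) : Integrable fun a => G (consR a x) * f a :=
  hf.bdd_mul
    (hG.comp (continuous_consR_left x)).aestronglyMeasurable (ae_of_all _ fun _ => hGC _)

theorem stronglyMeasurable_Lzero (hfc : Continuous f) {u : (ℕ → ℝ) → ℝ} (hu : Continuous u) :
    StronglyMeasurable (Lzero f u) :=
  ((hu.comp (continuous_consR.comp (continuous_snd.prodMk continuous_fst))).mul
    (hfc.comp continuous_snd)).stronglyMeasurable.integral_prod_right'

theorem Lzero_const (hf1 : ∫ a, f a = 1) (c : ℝ) (x : ℕ → ℝ) : Lzero f (fun _ => c) x = c := by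
  simp [Lzero, integral_const_mul, hf1]

theorem Lzero_add_const (hf1 : ∫ a, f a = 1) {u : (ℕ → ℝ) → ℝ} {x : ℕ → ℝ}
    (hu : Integrable fun a => u (consR a x) * f a) (c : ℝ) :
    Lzero f (fun z => u z + c) x = Lzero f u x + c := by
  have hf : Integrable f := .of_integral_ne_zero (by simp [hf1])
  simp only [Lzero, add_mul]
  rw [integral_add hu (hf.const_mul c), integral_const_mul, hf1, mul_one]

theorem abs_Lzero_le (hf0 : ∀ a, 0 ≤ f a) (hf1 : ∫ a, f a = 1) {G : (ℕ → ℝ) → ℝ} {C : ℝ}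
    (hGC : ∀ z, |G z| ≤ C) (x : ℕ → ℝ) : |Lzero f G x| ≤ C := by
  have hf : Integrable f := .of_integral_ne_zero (by simp [hf1])
  have h := norm_integral_le_of_norm_le (f := fun a => G (consR a x) * f a) (hf.const_mul C)
    (ae_of_all _ fun a => by
    rw [norm_mul, Real.norm_of_nonneg (hf0 a), Real.norm_eq_abs]
    exact mul_le_mul_of_nonneg_right (hGC _) (hf0 a))
  rwa [integral_const_mul, hf1, mul_one] at h

theorem Lzero_mem_Icc (hf0 : ∀ a, 0 ≤ f a) (hf1 : ∫ a, f a = 1) {u : (ℕ → ℝ) → ℝ}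
    (hu : Continuous u) {m M : ℝ} (hmu : ∀ z, m ≤ u z) (huM : ∀ z, u z ≤ M) (x : ℕ → ℝ) :
    Lzero f u x ∈ Set.Icc m M := by
  have hf : Integrable f := .of_integral_ne_zero (by simp [hf1])
  have hux := integrable_comp_consR_mul hf hu (fun z => abs_le_max_abs_abs (hmu z) (huM z)) x
  constructor
  · calc m = Lzero f (fun _ => m) x := (Lzero_const hf1 m x).symm
      _ ≤ Lzero f u x := integral_mono (hf.const_mul m) hux fun a =>
          mul_le_mul_of_nonneg_right (hmu _) (hf0 a)
  · calc Lzero f u x ≤ Lzero f (fun _ => M) x := integral_mono hux (hf.const_mul M) fun a =>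
          mul_le_mul_of_nonneg_right (huM _) (hf0 a)
      _ = M := Lzero_const hf1 M x

theorem Lzero_pos (hf0 : ∀ a, 0 ≤ f a) (hf1 : ∫ a, f a = 1) {u : (ℕ → ℝ) → ℝ}
    (hu : Continuous u) (hupos : ∀ z, 0 < u z) {M : ℝ} (huM : ∀ z, u z ≤ M) (x : ℕ → ℝ) :
    0 < Lzero f u x := by
  have hf : Integrable f := .of_integral_ne_zero (by simp [hf1])
  have hux := integrable_comp_consR_mul hf hu
    (fun z => abs_le_max_abs_abs (hupos z).le (huM z)) x
  rw [Lzero, integral_pos_iff_support_of_nonneg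
      (fun a => mul_nonneg (hupos _).le (hf0 a)) hux, Function.support_mul,
    Function.support_eq_univ fun a => (hupos _).ne', Set.univ_inter,
    ← integral_pos_iff_support_of_nonneg hf0 hf, hf1]
  exact one_pos

end Lzero

noncomputable def ruelle (f : ℝ → ℝ) (B u : (ℕ → ℝ) → ℝ) : (ℕ → ℝ) → ℝ :=
  Lzero f fun z => exp (B z) * u z

section Ruelle

variable {f : ℝ → ℝ} {B : (ℕ → ℝ) → ℝ} {CB : ℝ}

theorem ruelle_le_log_ruelle_exp (hf0 : ∀ a, 0 ≤ f a) (hf1 : ∫ a, f a = 1) (hBc : Continuous B)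
    (hB : ∀ z, |B z| ≤ CB) (hnorm : ∀ x, ∫ a : ℝ, exp (B (consR a x)) * f a = 1)
    {φ : (ℕ → ℝ) → ℝ} (hφ : Continuous φ) {C : ℝ} (hφC : ∀ z, |φ z| ≤ C) (x : ℕ → ℝ) :
    ruelle f B φ x ≤ log (ruelle f B (fun z => exp (φ z)) x) := by
  have hf : Integrable f := .of_integral_ne_zero (by simp [hf1])
  have hcomm : ∀ ψ : (ℕ → ℝ) → ℝ, ruelle f B ψ x =
      ∫ a, exp (B (consR a x)) * f a * ψ (consR a x) := fun ψ =>
    integral_congr_ae (ae_of_all _ fun a => mul_right_comm _ _ _)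
  rw [hcomm, hcomm]
  refine integral_mul_le_log_integral_mul_exp (fun a => mul_nonneg (exp_pos _).le (hf0 a))
    (hnorm x) ?_ ?_ <;> simp only [mul_right_comm _ (f _)]
  · exact integrable_comp_consR_mul hf ((continuous_exp.comp hBc).mul hφ)
      (fun z => abs_exp_mul_le (hB z) (hφC z)) x
  · exact integrable_comp_consR_mul hf ((continuous_exp.comp hBc).mul (continuous_exp.comp hφ))
      (fun z => abs_exp_mul_le (hB z) ((abs_exp _).trans_le (exp_le_exp.2 (le_of_abs_le (hφC z)))))
      x

variable {μ : Measure (ℕ → ℝ)} [IsFiniteMeasure μ]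

theorem neg_integral_le_integral_log_Lzero_sub_log (hfc : Continuous f) (hf0 : ∀ a, 0 ≤ f a)
    (hf1 : ∫ a, f a = 1) (hBc : Continuous B) (hB : ∀ z, |B z| ≤ CB)
    (hnorm : ∀ x, ∫ a : ℝ, exp (B (consR a x)) * f a = 1)
    (hfix : ∀ φ : (ℕ → ℝ) → ℝ, Continuous φ → (∃ C, ∀ x, |φ x| ≤ C) →
      ∫ x, ruelle f B φ x ∂μ = ∫ x, φ x ∂μ)
    {u : (ℕ → ℝ) → ℝ} (hu : Continuous u) {ε M : ℝ} (hε : 0 < ε) (hεu : ∀ z, ε ≤ u z)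
    (huM : ∀ z, u z ≤ M) :
    -∫ x, B x ∂μ ≤ ∫ x, (log (Lzero f u x) - log (u x)) ∂μ := by
  have habs_log : ∀ {t}, ε ≤ t → t ≤ M → |log t| ≤ max |log ε| |log M| := fun hεt htM =>
    abs_le_max_abs_abs (log_le_log hε hεt) (log_le_log (hε.trans_le hεt) htM)
  set φ : (ℕ → ℝ) → ℝ := fun z => log (u z) - B z
  have hφc : Continuous φ := (hu.log fun z => (hε.trans_le (hεu z)).ne').sub hBc
  have hφC : ∀ z, |φ z| ≤ max |log ε| |log M| + CB := fun z =>
    (abs_sub _ _).trans (add_le_add (habs_log (hεu z) (huM z)) (hB z))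
  have hexp : ∀ x, ruelle f B (fun z => exp (φ z)) x = Lzero f u x := fun x => by
    simp only [ruelle, Lzero, φ, exp_sub, exp_log (hε.trans_le (hεu _))]
    exact integral_congr_ae (ae_of_all _ fun a => by field_simp)
  have hjensen : ∀ x, ruelle f B φ x ≤ log (Lzero f u x) := fun x =>
    (ruelle_le_log_ruelle_exp hf0 hf1 hBc hB hnorm hφc hφC x).trans_eq (by rw [hexp])
  have hint_ruelle : Integrable (ruelle f B φ) μ :=
    .of_bound (stronglyMeasurable_Lzero hfc ((continuous_exp.comp hBc).mul hφc)).aestronglyMeasurable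
      _ (ae_of_all _ fun x => abs_Lzero_le hf0 hf1 (fun z => abs_exp_mul_le (hB z) (hφC z)) x)
  have hint_logL : Integrable (fun x => log (Lzero f u x)) μ :=
    .of_bound (stronglyMeasurable_Lzero hfc hu).measurable.log.aestronglyMeasurable _
      (ae_of_all _ fun x => habs_log (Lzero_mem_Icc hf0 hf1 hu hεu huM x).1
        (Lzero_mem_Icc hf0 hf1 hu hεu huM x).2)
  have hint_logu : Integrable (fun x => log (u x)) μ :=
    .of_bound hu.measurable.log.aestronglyMeasurable _
      (ae_of_all _ fun x => habs_log (hεu x) (huM x))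
  have hint_B : Integrable B μ := .of_bound hBc.aestronglyMeasurable _ (ae_of_all _ hB)
  calc -∫ x, B x ∂μ = ∫ x, φ x ∂μ - ∫ x, log (u x) ∂μ := by
        rw [integral_sub hint_logu hint_B]; ring
    _ = ∫ x, ruelle f B φ x ∂μ - ∫ x, log (u x) ∂μ := by rw [hfix φ hφc ⟨_, hφC⟩]
    _ ≤ ∫ x, log (Lzero f u x) ∂μ - ∫ x, log (u x) ∂μ := by
        exact sub_le_sub_right (integral_mono hint_ruelle hint_logL hjensen) _
    _ = ∫ x, (log (Lzero f u x) - log (u x)) ∂μ := (integral_sub hint_logL hint_logu).symm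

theorem neg_integral_le_integral_log_Lzero_div (hfc : Continuous f) (hf0 : ∀ a, 0 ≤ f a)
    (hf1 : ∫ a, f a = 1) (hBc : Continuous B) (hB : ∀ z, |B z| ≤ CB)
    (hnorm : ∀ x, ∫ a : ℝ, exp (B (consR a x)) * f a = 1)
    (hfix : ∀ φ : (ℕ → ℝ) → ℝ, Continuous φ → (∃ C, ∀ x, |φ x| ≤ C) →
      ∫ x, ruelle f B φ x ∂μ = ∫ x, φ x ∂μ)
    {u : (ℕ → ℝ) → ℝ} (hu : Continuous u) (hupos : ∀ z, 0 < u z) {M : ℝ} (huM : ∀ z, u z ≤ M) :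
    -∫ x, B x ∂μ ≤ ∫ x, log (Lzero f u x / u x) ∂μ := by
  have hlog_div : ∀ x, log (Lzero f u x / u x) = log (Lzero f u x) - log (u x) := fun x =>
    log_div (Lzero_pos hf0 hf1 hu hupos huM x).ne' (hupos x).ne'
  by_cases hint : Integrable (fun x => log (Lzero f u x / u x)) μ
  swap
  · have h := neg_integral_le_integral_log_Lzero_sub_log hfc hf0 hf1 hBc hB hnorm hfix
      continuous_const one_pos (fun _ => le_rfl) (fun _ => le_rfl) (μ := μ)
    simpa [Lzero_const hf1, integral_undef hint] using h
  have hf : Integrable f := .of_integral_ne_zero (by simp [hf1])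
  set F : ℕ → (ℕ → ℝ) → ℝ := fun n x =>
    log (Lzero f u x + 1 / (n + 1)) - log (u x + 1 / (n + 1))
  have hF : ∀ n : ℕ, -∫ x, B x ∂μ ≤ ∫ x, F n x ∂μ := fun n => by
    have hux := integrable_comp_consR_mul hf hu
      (fun z => abs_le_max_abs_abs (hupos z).le (huM z))
    simpa only [Lzero_add_const hf1 (hux _)] using
      neg_integral_le_integral_log_Lzero_sub_log hfc hf0 hf1 hBc hB hnorm hfix
        (u := fun z => u z + 1 / (n + 1)) (hu.add continuous_const) Nat.one_div_pos_of_nat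
        (fun z => le_add_of_nonneg_left (hupos z).le) (fun z => add_le_add_left (huM z) _)
  have hF_meas : ∀ n, AEStronglyMeasurable (F n) μ := fun n =>
    (((stronglyMeasurable_Lzero hfc hu).measurable.add_const _).log.sub
      (hu.measurable.add_const _).log).aestronglyMeasurable
  have hF_dom : ∀ n, ∀ᵐ x ∂μ, ‖F n x‖ ≤ |log (Lzero f u x / u x)| := fun n =>
    ae_of_all _ fun x => by
      rw [Real.norm_eq_abs, hlog_div]
      exact abs_log_add_sub_log_add_le (Lzero_pos hf0 hf1 hu hupos huM x) (hupos x)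
        Nat.one_div_pos_of_nat.le
  have hlog_lim : ∀ {t : ℝ}, 0 < t →
      Tendsto (fun n : ℕ => log (t + 1 / (n + 1))) atTop (𝓝 (log t)) := fun {t} ht =>
    (continuousAt_log ht.ne').tendsto.comp
      (by simpa only [add_zero] using tendsto_one_div_add_atTop_nhds_zero_nat.const_add t)
  have hF_lim : ∀ᵐ x ∂μ, Tendsto (fun n => F n x) atTop (𝓝 (log (Lzero f u x / u x))) :=
    ae_of_all _ fun x => by
      rw [hlog_div]
      exact (hlog_lim (Lzero_pos hf0 hf1 hu hupos huM x)).sub (hlog_lim (hupos x))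
  exact ge_of_tendsto (tendsto_integral_of_dominated_convergence _ hF_meas hint.abs hF_dom hF_lim)
    (Eventually.of_forall hF)

end Ruelle

theorem entropy_of_gibbs_state_general (f : ℝ → ℝ) (hfc : Continuous f) (hfpos : ∀ a, 0 < f a)
    (hf1 : ∫ a : ℝ, f a = 1)
    (B : (ℕ → ℝ) → ℝ) (hBc : Continuous B) (CB : ℝ) (hB : ∀ x, |B x| ≤ CB)
    (hnorm : ∀ x, ∫ a : ℝ, Real.exp (B (consR a x)) * f a = 1)
    (μ : Measure (ℕ → ℝ)) [IsProbabilityMeasure μ]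
    (hfix : ∀ φ : (ℕ → ℝ) → ℝ, Continuous φ → (∃ C, ∀ x, |φ x| ≤ C) →
      ∫ x, (∫ a : ℝ, Real.exp (B (consR a x)) * φ (consR a x) * f a) ∂μ = ∫ x, φ x ∂μ) :
    (∀ u : (ℕ → ℝ) → ℝ, Continuous u → (∀ x, 0 < u x) → (∃ M, ∀ x, u x ≤ M) →
      -∫ x, B x ∂μ ≤ ∫ x, Real.log (Lzero f u x / u x) ∂μ) ∧
    (∫ x, Real.log (Lzero f (fun z => Real.exp (B z)) x / Real.exp (B x)) ∂μ
        = -∫ x, B x ∂μ) ∧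
    entropyXY f μ = -∫ x, B x ∂μ := by
  have lower_bound : ∀ u : (ℕ → ℝ) → ℝ, Continuous u → (∀ x, 0 < u x) → (∃ M, ∀ x, u x ≤ M) →
      -∫ x, B x ∂μ ≤ ∫ x, Real.log (Lzero f u x / u x) ∂μ := fun u hu hupos ⟨_, huM⟩ =>
    neg_integral_le_integral_log_Lzero_div hfc (fun a => (hfpos a).le) hf1 hBc hB hnorm hfix hu
      hupos huM
  have equality : ∫ x, Real.log (Lzero f (fun z => Real.exp (B z)) x / Real.exp (B x)) ∂μ
      = -∫ x, B x ∂μ := by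
    simp only [Lzero, hnorm, one_div, log_inv, log_exp, integral_neg]
  refine ⟨lower_bound, equality, IsLeast.csInf_eq ⟨⟨_, continuous_exp.comp hBc, fun _ => exp_pos _,
    ⟨exp CB, fun x => exp_le_exp.2 (le_of_abs_le (hB x))⟩, equality.symm⟩, ?_⟩⟩
  rintro r ⟨u, hu, hupos, hbdd, rfl⟩
  exact lower_bound u hu hupos hbdd

/-- For a bounded continuous normalized potential `B` (`L_B(1) = 1`) and a
`σ`-invariant probability measure `μ` with `L_B^* μ = μ`: for every strictly
positive bounded continuous `u`, `∫ log(L_0(u)/u) dμ ≥ −∫ B dμ`, with equality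
for `u = e^B`; consequently `h(μ) = −∫ B dμ`. -/
theorem entropy_of_gibbs_state (f : ℝ → ℝ) (hfc : Continuous f) (hfpos : ∀ a, 0 < f a)
    (hf1 : ∫ a : ℝ, f a = 1)
    (B : (ℕ → ℝ) → ℝ) (hBc : Continuous B) (CB : ℝ) (hB : ∀ x, |B x| ≤ CB)
    (hnorm : ∀ x, ∫ a : ℝ, Real.exp (B (consR a x)) * f a = 1)
    (μ : Measure (ℕ → ℝ)) [IsProbabilityMeasure μ]
    (hinv : MeasurePreserving shiftR μ μ)
    (hfix : ∀ φ : (ℕ → ℝ) → ℝ, Continuous φ → (∃ C, ∀ x, |φ x| ≤ C) →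
      ∫ x, (∫ a : ℝ, Real.exp (B (consR a x)) * φ (consR a x) * f a) ∂μ = ∫ x, φ x ∂μ) :
    (∀ u : (ℕ → ℝ) → ℝ, Continuous u → (∀ x, 0 < u x) → (∃ M, ∀ x, u x ≤ M) →
      -∫ x, B x ∂μ ≤ ∫ x, Real.log (Lzero f u x / u x) ∂μ) ∧
    (∫ x, Real.log (Lzero f (fun z => Real.exp (B z)) x / Real.exp (B x)) ∂μ
        = -∫ x, B x ∂μ) ∧
    entropyXY f μ = -∫ x, B x ∂μ :=
  entropy_of_gibbs_state_general f hfc hfpos hf1 B hBc CB hB hnorm μ hfix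
end

section
/- Let A : ℝ^ℕ → ℝ be bounded continuous with m(A) = sup over σ-invariant probability measures μ of ∫ A dμ. Suppose (β_n) → ∞ and μ_{β_n A} are σ-invariant probability measures with h(μ_{β_nA}) ≤ 0, (1/β_n) h(μ_{β_nA}) + ∫ A dμ_{β_nA} = (1/β_n) log λ_{β_nA}, (1/β_n) log λ_{β_nA} → m(A), and μ_{β_nA} → μ_∞ weakly. Then ∫ A dμ_∞ = m(A), i.e., μ_∞ is an A-maximizing measure. -/
open Real MeasureTheory Filter Topology

/-- Squeeze argument: if `β_n → ∞`, `h(μ_{β_nA}) ≤ 0`,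
`(1/β_n)h(μ_{β_nA}) + ∫ A dμ_{β_nA} = (1/β_n) log λ_{β_nA}`,
`(1/β_n) log λ_{β_nA} → m(A)`, and `μ_{β_nA} → μ_∞` weakly with `μ_∞`
`σ`-invariant, then `∫ A dμ_∞ = m(A)`, i.e. `μ_∞` is `A`-maximizing. -/
theorem zero_temperature_maximizing (f : ℝ → ℝ) (hfc : Continuous f)
    (hfpos : ∀ a, 0 < f a) (hf1 : ∫ a : ℝ, f a = 1)
    (A : (ℕ → ℝ) → ℝ) (hAc : Continuous A) (CA : ℝ) (hA : ∀ x, |A x| ≤ CA)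
    (mA : ℝ)
    (hmA : mA = sSup {r : ℝ | ∃ μ : Measure (ℕ → ℝ), IsProbabilityMeasure μ ∧
      MeasurePreserving shiftR μ μ ∧ r = ∫ x, A x ∂μ})
    (β : ℕ → ℝ) (hβpos : ∀ n, 0 < β n) (hβ : Tendsto β atTop atTop)
    (μseq : ℕ → Measure (ℕ → ℝ)) (hprob : ∀ n, IsProbabilityMeasure (μseq n))
    (hinvn : ∀ n, MeasurePreserving shiftR (μseq n) (μseq n))
    (lam : ℕ → ℝ)
    (hent : ∀ n, entropyXY f (μseq n) ≤ 0)
    (heq : ∀ n, (β n)⁻¹ * entropyXY f (μseq n) + ∫ x, A x ∂(μseq n)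
      = (β n)⁻¹ * Real.log (lam n))
    (hlim : Tendsto (fun n => (β n)⁻¹ * Real.log (lam n)) atTop (nhds mA))
    (μinf : Measure (ℕ → ℝ)) (hprobinf : IsProbabilityMeasure μinf)
    (hinvinf : MeasurePreserving shiftR μinf μinf)
    (hweak : ∀ g : (ℕ → ℝ) → ℝ, Continuous g → (∃ C, ∀ x, |g x| ≤ C) →
      Tendsto (fun n => ∫ x, g x ∂(μseq n)) atTop (nhds (∫ x, g x ∂μinf))) :
    ∫ x, A x ∂μinf = mA := by
  have hAint : ∀ μ : Measure (ℕ → ℝ), IsProbabilityMeasure μ → Integrable A μ := by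
    intro μ hμ
    refine ⟨hAc.aestronglyMeasurable, ?_⟩
    apply MeasureTheory.HasFiniteIntegral.of_bounded (C := CA)
    filter_upwards with x using (by simpa using hA x)
  have hbound : ∀ μ : Measure (ℕ → ℝ), IsProbabilityMeasure μ → (∫ x, A x ∂μ) ≤ CA := by
    intro μ hμ
    calc ∫ x, A x ∂μ ≤ ∫ x, CA ∂μ := by
          apply integral_mono (hAint μ hμ) (integrable_const CA)
          intro x; exact (abs_le.mp (hA x)).2
      _ = CA := by simp
  -- μinf is in the set, so ∫A dμinf ≤ mA
  have hle : ∫ x, A x ∂μinf ≤ mA := by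
    rw [hmA]
    apply le_csSup
    · refine ⟨CA, ?_⟩
      rintro r ⟨μ, hμp, hμi, rfl⟩
      exact hbound μ hμp
    · exact ⟨μinf, hprobinf, hinvinf, rfl⟩
  have htend : Tendsto (fun n => ∫ x, A x ∂(μseq n)) atTop (nhds (∫ x, A x ∂μinf)) :=
    hweak A hAc ⟨CA, hA⟩
  have hge : mA ≤ ∫ x, A x ∂μinf := by
    apply le_of_tendsto_of_tendsto hlim htend
    filter_upwards with n
    have h1 := heq n
    have h2 : (β n)⁻¹ * entropyXY f (μseq n) ≤ 0 :=
      mul_nonpos_of_nonneg_of_nonpos (inv_nonneg.mpr (hβpos n).le) (hent n)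
    linarith
  linarith
end
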